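/- Φ_R(A) is the nearest point to A in the convex set {τ ∈ S_d : |τ^D| ≤ R}: for all R ≥ 0, A ∈ S_d, and all B ∈ S_d with |B^D| ≤ R, one has |Φ_R(A) - A| ≤ |B - A|. -/

import Mathlib

open Matrix BigOperators

/-- Frobenius inner product on d×d real matrices. -/
noncomputable def finner {d : ℕ} (A B : Matrix (Fin d) (Fin d) ℝ) : ℝ :=
  ∑ i, ∑ j, A i j * B i j

/-- Frobenius norm. -/
noncomputable def fnorm {d : ℕ} (A : Matrix (Fin d) (Fin d) ℝ) : ℝ :=
  Real.sqrt (finner A A)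

/-- Deviatoric part: A - (tr A / d) • I. -/
noncomputable def dev {d : ℕ} (A : Matrix (Fin d) (Fin d) ℝ) : Matrix (Fin d) (Fin d) ℝ :=
  A - (A.trace / (d : ℝ)) • (1 : Matrix (Fin d) (Fin d) ℝ)

/-- Pointwise projection onto {|τ^D| ≤ R}. -/
noncomputable def Phi {d : ℕ} (R : ℝ) (A : Matrix (Fin d) (Fin d) ℝ) :
    Matrix (Fin d) (Fin d) ℝ :=
  if fnorm (dev A) ≤ R then A
  else (A.trace / (d : ℝ)) • (1 : Matrix (Fin d) (Fin d) ℝ) + (R / fnorm (dev A)) • dev A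

/-!
The map `A ↦ A^D` is the orthogonal projection onto trace-free matrices, so it is 1-Lipschitz
for the Frobenius norm. If `|A^D| > R`, then `Φ_R(A) - A = (R / |A^D| - 1) A^D` has norm
`|A^D| - R`, and for every `B` with `|B^D| ≤ R`,
`|A^D| - R ≤ |A^D| - |B^D| ≤ |A^D - B^D| = |(A - B)^D| ≤ |A - B|`.
-/

noncomputable def flatten {m n : Type*} (M : Matrix m n ℝ) : EuclideanSpace ℝ (m × n) :=
  WithLp.toLp 2 fun p => M p.1 p.2

lemma flatten_add {m n : Type*} (A B : Matrix m n ℝ) :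
    flatten (A + B) = flatten A + flatten B := rfl

lemma flatten_sub {m n : Type*} (A B : Matrix m n ℝ) :
    flatten (A - B) = flatten A - flatten B := rfl

lemma flatten_smul {m n : Type*} (c : ℝ) (A : Matrix m n ℝ) :
    flatten (c • A) = c • flatten A := rfl

section Frobenius

variable {d : ℕ}

lemma finner_eq_inner_flatten (A B : Matrix (Fin d) (Fin d) ℝ) :
    finner A B = inner ℝ (flatten A) (flatten B) := by
  simp [finner, flatten, PiLp.inner_apply, Fintype.sum_prod_type, mul_comm]

lemma fnorm_eq_norm_flatten (M : Matrix (Fin d) (Fin d) ℝ) : fnorm M = ‖flatten M‖ := by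
  rw [fnorm, finner_eq_inner_flatten, real_inner_self_eq_norm_sq, Real.sqrt_sq (norm_nonneg _)]

lemma fnorm_zero : fnorm (0 : Matrix (Fin d) (Fin d) ℝ) = 0 := by
  simp [fnorm, finner]

lemma fnorm_nonneg (M : Matrix (Fin d) (Fin d) ℝ) : 0 ≤ fnorm M :=
  Real.sqrt_nonneg _

lemma fnorm_smul (c : ℝ) (M : Matrix (Fin d) (Fin d) ℝ) : fnorm (c • M) = |c| * fnorm M := by
  rw [fnorm_eq_norm_flatten, flatten_smul, norm_smul, fnorm_eq_norm_flatten, Real.norm_eq_abs]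

lemma fnorm_sub_comm (A B : Matrix (Fin d) (Fin d) ℝ) : fnorm (A - B) = fnorm (B - A) := by
  simp only [fnorm_eq_norm_flatten, flatten_sub, norm_sub_rev]

lemma fnorm_sub_fnorm_le (A B : Matrix (Fin d) (Fin d) ℝ) : fnorm A - fnorm B ≤ fnorm (A - B) := by
  simp only [fnorm_eq_norm_flatten, flatten_sub]
  exact norm_sub_norm_le _ _

lemma inner_flatten_smul_one (M : Matrix (Fin d) (Fin d) ℝ) (c : ℝ) :
    inner ℝ (flatten M) (flatten (c • (1 : Matrix (Fin d) (Fin d) ℝ))) = c * M.trace := by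
  rw [← finner_eq_inner_flatten]
  simp [finner, one_apply, Matrix.trace, Finset.mul_sum, mul_comm]

end Frobenius

section Deviator

variable {d : ℕ}

lemma dev_sub (A B : Matrix (Fin d) (Fin d) ℝ) : dev (A - B) = dev A - dev B := by
  simp only [dev, trace_sub, sub_div, sub_smul]
  abel

lemma trace_dev (A : Matrix (Fin d) (Fin d) ℝ) : (dev A).trace = 0 := by
  rcases Nat.eq_zero_or_pos d with rfl | hd
  · simp [Matrix.trace]
  · simp only [dev, trace_sub, trace_smul, trace_one, Fintype.card_fin, smul_eq_mul]
    field_simp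
    ring

lemma fnorm_dev_le (M : Matrix (Fin d) (Fin d) ℝ) : fnorm (dev M) ≤ fnorm M := by
  set S : Matrix (Fin d) (Fin d) ℝ := (M.trace / (d : ℝ)) • 1
  have hsplit : flatten M = flatten (dev M) + flatten S := by
    rw [← flatten_add, dev, sub_add_cancel]
  have hperp : inner ℝ (flatten (dev M)) (flatten S) = 0 := by
    rw [inner_flatten_smul_one, trace_dev, mul_zero]
  rw [fnorm_eq_norm_flatten, fnorm_eq_norm_flatten, hsplit,
    mul_self_le_mul_self_iff (norm_nonneg _) (norm_nonneg _),
    norm_add_sq_eq_norm_sq_add_norm_sq_real hperp]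
  exact le_add_of_nonneg_right (mul_self_nonneg _)

end Deviator

lemma fnorm_Phi_sub_self_of_lt {d : ℕ} {R : ℝ} (hR : 0 ≤ R) (A : Matrix (Fin d) (Fin d) ℝ)
    (h : R < fnorm (dev A)) : fnorm (Phi R A - A) = fnorm (dev A) - R := by
  have hpos : 0 < fnorm (dev A) := hR.trans_lt h
  have hPhi : Phi R A - A = (R / fnorm (dev A) - 1) • dev A := by
    rw [Phi, if_neg h.not_ge, sub_smul, one_smul, dev]
    abel
  rw [hPhi, fnorm_smul, abs_of_nonpos (by rw [sub_nonpos, div_le_one hpos]; exact h.le)]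
  field_simp
  ring

theorem Phi_nearest_point_general {d : ℕ} (R : ℝ)
    (A B : Matrix (Fin d) (Fin d) ℝ)
    (hBD : fnorm (dev B) ≤ R) :
    fnorm (Phi R A - A) ≤ fnorm (B - A) := by
  by_cases h : fnorm (dev A) ≤ R
  · rw [Phi, if_pos h, sub_self, fnorm_zero]
    exact fnorm_nonneg _
  · calc fnorm (Phi R A - A) = fnorm (dev A) - R :=
          fnorm_Phi_sub_self_of_lt ((fnorm_nonneg _).trans hBD) A (not_le.mp h)
      _ ≤ fnorm (dev A) - fnorm (dev B) := by linarith
      _ ≤ fnorm (dev A - dev B) := fnorm_sub_fnorm_le _ _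
      _ = fnorm (dev (B - A)) := by rw [dev_sub, fnorm_sub_comm]
      _ ≤ fnorm (B - A) := fnorm_dev_le _

/-- Φ_R(A) is nearest to A in {|τ^D| ≤ R}. -/
theorem Phi_nearest_point {d : ℕ} (hd : 2 ≤ d) (R : ℝ) (hR : 0 ≤ R)
    (A B : Matrix (Fin d) (Fin d) ℝ) (hA : A.IsSymm) (hB : B.IsSymm)
    (hBD : fnorm (dev B) ≤ R) :
    fnorm (Phi R A - A) ≤ fnorm (B - A) :=
  Phi_nearest_point_general R A B hBD
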